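/- Suppose the Hessian of f is L-Lipschitz. Given x̄ ∈ ℝⁿ and h > 0, let g ∈ ℝⁿ be defined by g_i = (f(x̄ + h·e_i) − f(x̄ − h·e_i))/(2h) for i = 1, …, n. Then ‖g − ∇f(x̄)‖ ≤ (√n · L / 6)·h². -/

import Mathlib

/-!
Restrict `f` to the line `t ↦ x + t • e`: `φ t = f (x + t • e)` has `φ' = χ` and `χ' = dχ`, where
`dχ` is Lipschitz with constant `L ‖e‖³`. The even part `ρ t = χ t + χ (-t) - 2 χ 0` vanishes at `0`
and has `|ρ'| = |dχ t - dχ (-t)| ≤ 2 L t`, so `|ρ t| ≤ L t²`; the odd part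
`ψ t = φ t - φ (-t) - 2 t χ 0` vanishes at `0` and has `ψ' = ρ`, so `|ψ h| ≤ L h³ / 3`. Dividing by
`2h` bounds each coordinate error by `L h² / 6`, and the Euclidean norm of `n` such errors is at
most `√n` times that.
-/

open RealInnerProductSpace

theorem norm_le_of_norm_deriv_le_mul_pow {E : Type*} [NormedAddCommGroup E] [NormedSpace ℝ E]
    {ψ ψ' : ℝ → E} {C : ℝ} {k : ℕ} (hψ₀ : ψ 0 = 0) (hψ : ∀ t, HasDerivAt ψ (ψ' t) t)
    (hbound : ∀ t, 0 ≤ t → ‖ψ' t‖ ≤ C * t ^ k) {t : ℝ} (ht : 0 ≤ t) :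
    ‖ψ t‖ ≤ C * t ^ (k + 1) / (k + 1) := by
  have hB (s : ℝ) : HasDerivAt (fun s => C * s ^ (k + 1) / (k + 1)) (C * s ^ k) s := by
    refine (((hasDerivAt_pow (k + 1) s).const_mul C).div_const ((k : ℝ) + 1)).congr_deriv ?_
    rw [Nat.add_sub_cancel]
    push_cast
    field_simp
  exact image_norm_le_of_norm_deriv_right_le_deriv_boundary (a := 0) (b := t)
    (fun s _ => (hψ s).continuousAt.continuousWithinAt) (fun s _ => (hψ s).hasDerivWithinAt)
    (by simp [hψ₀]) hB (fun s hs => hbound s hs.1) ⟨ht, le_rfl⟩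

theorem HasDerivAt.comp_neg {f : ℝ → ℝ} {f' x : ℝ} (hf : HasDerivAt f f' (-x)) :
    HasDerivAt (fun t => f (-t)) (-f') x := by
  simpa [Function.comp_def] using hf.comp x (hasDerivAt_neg x)

theorem abs_centralDifference_sub_deriv_le {φ χ dχ : ℝ → ℝ} {K h : ℝ}
    (hφ : ∀ t, HasDerivAt φ (χ t) t) (hχ : ∀ t, HasDerivAt χ (dχ t) t)
    (hlip : ∀ s t, |dχ s - dχ t| ≤ K * |s - t|) (hh : 0 < h) :
    |(φ h - φ (-h)) / (2 * h) - χ 0| ≤ K * h ^ 2 / 6 := by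
  have heven (t : ℝ) (ht : 0 ≤ t) : |χ t + χ (-t) - 2 * χ 0| ≤ K * t ^ 2 := by
    have hderiv (s : ℝ) : HasDerivAt (fun s => χ s + χ (-s) - 2 * χ 0) (dχ s - dχ (-s)) s := by
      simpa [← sub_eq_add_neg] using
        ((hχ s).add (hχ (-s)).comp_neg).sub_const (2 * χ 0)
    have hbound (s : ℝ) (hs : 0 ≤ s) : ‖dχ s - dχ (-s)‖ ≤ 2 * K * s ^ 1 := by
      have := hlip s (-s)
      rw [sub_neg_eq_add, ← two_mul, abs_of_nonneg (by positivity : (0:ℝ) ≤ 2 * s)] at this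
      rw [Real.norm_eq_abs]
      linarith
    have := norm_le_of_norm_deriv_le_mul_pow (by simp; ring) hderiv hbound ht
    rw [Real.norm_eq_abs] at this
    convert this using 1
    push_cast
    ring
  have hodd : |φ h - φ (-h) - 2 * h * χ 0| ≤ K * h ^ 3 / 3 := by
    have hderiv (s : ℝ) :
        HasDerivAt (fun s => φ s - φ (-s) - 2 * s * χ 0) (χ s + χ (-s) - 2 * χ 0) s := by
      simpa [sub_neg_eq_add] using
        ((hφ s).fun_sub (hφ (-s)).comp_neg).fun_sub
          (((hasDerivAt_id s).const_mul 2).mul_const (χ 0))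
    have := norm_le_of_norm_deriv_le_mul_pow (by simp) hderiv
      (fun s hs => (Real.norm_eq_abs _).trans_le (heven s hs)) hh.le
    rw [Real.norm_eq_abs] at this
    convert this using 1
    push_cast
    ring
  calc |(φ h - φ (-h)) / (2 * h) - χ 0| = |φ h - φ (-h) - 2 * h * χ 0| / (2 * h) := by
        rw [div_sub' (by positivity), abs_div, abs_of_pos (by positivity : 0 < 2 * h)]
    _ ≤ K * h ^ 3 / 3 / (2 * h) := by gcongr
    _ = K * h ^ 2 / 6 := by field_simp; ring

section Gradient

variable {F : Type*} [NormedAddCommGroup F] [InnerProductSpace ℝ F] [CompleteSpace F]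

theorem ContDiff.differentiable_gradient {f : F → ℝ} (hf : ContDiff ℝ 2 f) :
    Differentiable ℝ (gradient f) :=
  (InnerProductSpace.toDual ℝ F).symm.differentiable.comp
    (hf.fderiv_right (m := 1) le_rfl).differentiable_one

theorem abs_centralDifference_sub_inner_gradient_le {f : F → ℝ} {L : ℝ} (hf : ContDiff ℝ 2 f)
    (hLip : ∀ u v, ‖fderiv ℝ (gradient f) v - fderiv ℝ (gradient f) u‖ ≤ L * ‖v - u‖)
    (x e : F) {h : ℝ} (hh : 0 < h) :
    |(f (x + h • e) - f (x - h • e)) / (2 * h) - ⟪gradient f x, e⟫| ≤ L * ‖e‖ ^ 3 * h ^ 2 / 6 := by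
  set c : ℝ → F := fun t => x + t • e
  set H := fderiv ℝ (gradient f)
  have hc (t : ℝ) : HasDerivAt c e t := by
    simpa [c] using ((hasDerivAt_id t).smul_const e).const_add x
  have hφ (t : ℝ) : HasDerivAt (fun t => f (c t)) ⟪gradient f (c t), e⟫ t := by
    rw [inner_gradient_left]
    exact (hf.differentiable two_ne_zero (c t)).hasFDerivAt.comp_hasDerivAt t (hc t)
  have hχ (t : ℝ) : HasDerivAt (fun t => ⟪gradient f (c t), e⟫) ⟪H (c t) e, e⟫ t := by
    simpa using ((hf.differentiable_gradient (c t)).hasFDerivAt.comp_hasDerivAt t (hc t)).inner ℝ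
      (hasDerivAt_const t e)
  have hlip (s t : ℝ) : |⟪H (c s) e, e⟫ - ⟪H (c t) e, e⟫| ≤ L * ‖e‖ ^ 3 * |s - t| := by
    have hcst : ‖c s - c t‖ = |s - t| * ‖e‖ := by
      simp only [c, add_sub_add_left_eq_sub, ← sub_smul, norm_smul, Real.norm_eq_abs]
    calc |⟪H (c s) e, e⟫ - ⟪H (c t) e, e⟫| = |⟪(H (c s) - H (c t)) e, e⟫| := by
          rw [sub_apply, inner_sub_left]
      _ ≤ ‖H (c s) - H (c t)‖ * ‖e‖ * ‖e‖ :=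
          (abs_real_inner_le_norm _ _).trans (by gcongr; exact ContinuousLinearMap.le_opNorm _ _)
      _ ≤ L * ‖c s - c t‖ * ‖e‖ * ‖e‖ := by gcongr; exact hLip _ _
      _ = L * ‖e‖ ^ 3 * |s - t| := by rw [hcst]; ring
  simpa [c, sub_eq_add_neg] using abs_centralDifference_sub_deriv_le hφ hχ hlip hh

end Gradient

theorem EuclideanSpace.norm_le_sqrt_card_mul {ι : Type*} [Fintype ι] {x : EuclideanSpace ℝ ι}
    {B : ℝ} (hx : ∀ i, |x i| ≤ B) : ‖x‖ ≤ √(Fintype.card ι) * B := by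
  rcases isEmpty_or_nonempty ι with _ | ⟨⟨i₀⟩⟩
  · simp [Subsingleton.elim x 0]
  have hB : 0 ≤ B := (abs_nonneg _).trans (hx i₀)
  calc ‖x‖ = √(∑ i, |x i| ^ 2) := by simp [EuclideanSpace.norm_eq]
    _ ≤ √(∑ _i : ι, B ^ 2) := by gcongr with i; exact hx i
    _ = √(Fintype.card ι) * B := by
      rw [Finset.sum_const, Finset.card_univ, nsmul_eq_mul, Real.sqrt_mul (Nat.cast_nonneg _),
        Real.sqrt_sq hB]

theorem stmt_7_general {n : ℕ}
    (f : EuclideanSpace ℝ (Fin n) → ℝ)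
    (L : ℝ)
    (hf : ContDiff ℝ 2 f)
    (hLip : ∀ u v : EuclideanSpace ℝ (Fin n),
      ‖fderiv ℝ (gradient f) v - fderiv ℝ (gradient f) u‖ ≤ L * ‖v - u‖)
    (xbar : EuclideanSpace ℝ (Fin n)) (h : ℝ) (hh : 0 < h)
    (g : EuclideanSpace ℝ (Fin n))
    (hg : ∀ i : Fin n, g i =
      (f (xbar + h • EuclideanSpace.single i 1) - f (xbar - h • EuclideanSpace.single i 1))
        / (2 * h)) :
    ‖g - gradient f xbar‖ ≤ Real.sqrt n * L / 6 * h ^ 2 := by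
  have hcoord (i : Fin n) : |(g - gradient f xbar) i| ≤ L * h ^ 2 / 6 := by
    have := abs_centralDifference_sub_inner_gradient_le hf hLip xbar (EuclideanSpace.single i 1) hh
    rw [EuclideanSpace.inner_single_right, PiLp.norm_single, ← hg i] at this
    simpa using this
  calc ‖g - gradient f xbar‖ ≤ √n * (L * h ^ 2 / 6) := by
        simpa using EuclideanSpace.norm_le_sqrt_card_mul hcoord
    _ = Real.sqrt n * L / 6 * h ^ 2 := by ring

/-- Lemma 5 of the paper: accuracy of the central finite-difference
approximation of the gradient. -/
theorem stmt_7 {n : ℕ} (hn : 1 ≤ n)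
    (f : EuclideanSpace ℝ (Fin n) → ℝ)
    (L : ℝ) (hL : 0 ≤ L)
    (hf : ContDiff ℝ 2 f)
    (hLip : ∀ u v : EuclideanSpace ℝ (Fin n),
      ‖fderiv ℝ (gradient f) v - fderiv ℝ (gradient f) u‖ ≤ L * ‖v - u‖)
    (xbar : EuclideanSpace ℝ (Fin n)) (h : ℝ) (hh : 0 < h)
    (g : EuclideanSpace ℝ (Fin n))
    (hg : ∀ i : Fin n, g i =
      (f (xbar + h • EuclideanSpace.single i 1) - f (xbar - h • EuclideanSpace.single i 1))
        / (2 * h)) :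
    ‖g - gradient f xbar‖ ≤ Real.sqrt n * L / 6 * h ^ 2 :=
  stmt_7_general f L hf hLip xbar h hh g hg
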